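/- Local (vertex-star) form of Theorem 1.9(1). Let (m, p_0, p) be a spherical vertex star with edge weights c_j and vertex weight d_0. Suppose q_0 ∈ ℝ³ and q : ZMod m → ℝ³ satisfy ⟨q_j − q_0, p_j − p_0⟩ = 0 for all j ∈ ZMod m and ⟨q_{j+1} − q_j, p_{j+1} − p_j⟩ = 0 for all j ∈ ZMod m (an infinitesimal isometric deformation of the Euclidean triangulated cone over the star). Define f_0 := ⟨q_0, p_0⟩ and f_j := ⟨q_j, p_j⟩ (the radial components). Then ∑_{j∈ZMod m} c_j·(f_j − f_0) = −2·d_0·f_0; i.e. the radial component of an infinitesimal isometric deformation of a polyhedron inscribed in the unit sphere is a (−2)-eigenfunction of the discrete spherical Laplacian at the central vertex. -/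

import Mathlib

/-!
Three edge-length constraints on a nondegenerate triangle leave exactly the infinitesimal rigid
motions, so each face `p₀ p_j p_{j+1}` of the cone moves by some `x ↦ W ⨯₃ x + t`. Spherical
trigonometry turns the tangents in `c_j` into `(1 + ⟨a,b⟩ - ⟨b,c⟩ - ⟨a,c⟩) / det (a, b, c)`, and
with this closed form the contribution of a face to `∑ c_j (f_j - ⟨p₀,p_j⟩ f₀)` is `Φ_j - Φ_{j+1}`,
where `Φ_j = ⟨W,p₀⟩ + ⟨t, p₀ ⨯ p_j⟩ / (1 + ⟨p₀,p_j⟩)` depends only on the motion of the edge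
`p₀ p_j`, hence is the same for both faces at that edge. So that sum telescopes to `0`, and since
`2 sin² (λ_j / 2) = 1 - ⟨p₀,p_j⟩`, what remains of `∑ c_j (f_j - f₀)` is `-2 d₀ f₀`.
-/

noncomputable section

/-- Standard inner product on `ℝ³`. -/
def dot3 (x y : Fin 3 → ℝ) : ℝ := x 0 * y 0 + x 1 * y 1 + x 2 * y 2

/-- Euclidean norm on `ℝ³`. -/
def norm3 (x : Fin 3 → ℝ) : ℝ := Real.sqrt (dot3 x x)

/-- Cross product on `ℝ³`. -/
def cross3 (x y : Fin 3 → ℝ) : Fin 3 → ℝ :=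
  ![x 1 * y 2 - x 2 * y 1, x 2 * y 0 - x 0 * y 2, x 0 * y 1 - x 1 * y 0]

/-- Determinant of three vectors in `ℝ³`. -/
def det3 (x y z : Fin 3 → ℝ) : ℝ := dot3 (cross3 x y) z

/-- Spherical angle at `a` between `b` and `c` (all unit vectors). -/
def sphAngle (a b c : Fin 3 → ℝ) : ℝ :=
  Real.arccos (dot3 (b - dot3 a b • a) (c - dot3 a c • a) /
    (norm3 (b - dot3 a b • a) * norm3 (c - dot3 a c • a)))

/-- Edge weight `c_j` of the edge `(p₀, p_j)` of a spherical vertex star. -/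
def sphStarWeight (m : ℕ) (p0 : Fin 3 → ℝ) (p : ZMod m → Fin 3 → ℝ) (j : ZMod m) : ℝ :=
  (Real.tan ((sphAngle p0 (p j) (p (j+1)) + sphAngle (p j) (p (j+1)) p0
      - sphAngle (p (j+1)) p0 (p j)) / 2)
   + Real.tan ((sphAngle p0 (p (j-1)) (p j) + sphAngle (p j) p0 (p (j-1))
      - sphAngle (p (j-1)) (p j) p0) / 2))
  / (2 * Real.cos (Real.arccos (dot3 p0 (p j)) / 2) ^ 2)

/-- Vertex weight `d₀` of a spherical vertex star. -/
def sphStarVertexWeight (m : ℕ) [NeZero m] (p0 : Fin 3 → ℝ) (p : ZMod m → Fin 3 → ℝ) : ℝ :=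
  ∑ j : ZMod m, sphStarWeight m p0 p j * Real.sin (Real.arccos (dot3 p0 (p j)) / 2) ^ 2

open Matrix Real

lemma dot3_eq_dotProduct (x y : Fin 3 → ℝ) : dot3 x y = x ⬝ᵥ y := (vec3_dotProduct x y).symm

lemma dot3_comm (x y : Fin 3 → ℝ) : dot3 x y = dot3 y x := by
  unfold dot3
  ring

lemma det3_eq_dotProduct_cross (x y z : Fin 3 → ℝ) : det3 x y z = x ⬝ᵥ y ⨯₃ z := by
  rw [det3, dot3_eq_dotProduct, dotProduct_comm]
  exact triple_product_permutation z x y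

lemma norm3_eq_sqrt (x : Fin 3 → ℝ) : norm3 x = √(x ⬝ᵥ x) := by
  rw [norm3, dot3_eq_dotProduct]

lemma dotProduct_self_eq_one_of_norm3_eq_one {x : Fin 3 → ℝ} (hx : norm3 x = 1) : x ⬝ᵥ x = 1 := by
  rw [← dot3_eq_dotProduct]
  exact Real.sqrt_eq_one.1 hx

lemma cross_dotProduct (u v w : Fin 3 → ℝ) : u ⨯₃ v ⬝ᵥ w = u ⬝ᵥ v ⨯₃ w := by
  rw [dotProduct_comm]
  exact triple_product_permutation w u v

lemma triple_product_swap (a b c : Fin 3 → ℝ) : a ⬝ᵥ c ⨯₃ b = -(a ⬝ᵥ b ⨯₃ c) := by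
  rw [← cross_anticomm, dotProduct_neg]

lemma triple_product_sq (a b c : Fin 3 → ℝ) :
    (a ⬝ᵥ b ⨯₃ c) ^ 2 = a ⬝ᵥ a * (b ⬝ᵥ b) * (c ⬝ᵥ c) + 2 * (a ⬝ᵥ b) * (b ⬝ᵥ c) * (a ⬝ᵥ c)
      - a ⬝ᵥ a * (b ⬝ᵥ c) ^ 2 - b ⬝ᵥ b * (a ⬝ᵥ c) ^ 2 - c ⬝ᵥ c * (a ⬝ᵥ b) ^ 2 := by
  simp only [cross_apply, vec3_dotProduct, Matrix.cons_val]
  ring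

lemma eq_of_dotProduct_eq {a b c x y : Fin 3 → ℝ} (hd : a ⬝ᵥ b ⨯₃ c ≠ 0)
    (ha : x ⬝ᵥ a = y ⬝ᵥ a) (hb : x ⬝ᵥ b = y ⬝ᵥ b) (hc : x ⬝ᵥ c = y ⬝ᵥ c) : x = y := by
  rw [triple_product_eq_det] at hd
  refine sub_eq_zero.1 (eq_zero_of_mulVec_eq_zero hd ?_)
  ext i
  fin_cases i <;> simp [mulVec, dotProduct_comm _ (x - y), sub_dotProduct, *]

lemma cross_ne_zero_of_triple_product_ne_zero {a b c : Fin 3 → ℝ} (hd : a ⬝ᵥ b ⨯₃ c ≠ 0) :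
    b ⨯₃ c ≠ 0 := by
  rintro h
  simp [h] at hd

lemma one_sub_sq_dotProduct_pos {a b c : Fin 3 → ℝ} (ha : a ⬝ᵥ a = 1) (hb : b ⬝ᵥ b = 1)
    (hd : a ⬝ᵥ b ⨯₃ c ≠ 0) : 0 < 1 - (a ⬝ᵥ b) ^ 2 := by
  have hab : a ⨯₃ b ≠ 0 :=
    cross_ne_zero_of_triple_product_ne_zero (a := c) (by rwa [triple_product_permutation])
  have hpos : 0 < (a ⨯₃ b) ⬝ᵥ (a ⨯₃ b) :=
    (dotProduct_star_self_nonneg _).lt_of_ne' (dotProduct_self_eq_zero.not.2 hab)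
  rw [cross_dot_cross, ha, hb, dotProduct_comm b a] at hpos
  linarith

lemma exists_cross_eq_of_orthogonal {e₁ e₂ δ₁ δ₂ : Fin 3 → ℝ} (hn : e₁ ⨯₃ e₂ ≠ 0)
    (h₁ : δ₁ ⬝ᵥ e₁ = 0) (h₂ : δ₂ ⬝ᵥ e₂ = 0) (h₁₂ : δ₁ ⬝ᵥ e₂ + δ₂ ⬝ᵥ e₁ = 0) :
    ∃ W, W ⨯₃ e₁ = δ₁ ∧ W ⨯₃ e₂ = δ₂ := by
  set n := e₁ ⨯₃ e₂ with hn_def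
  have hnn : n ⬝ᵥ n ≠ 0 := dotProduct_self_eq_zero.not.2 hn
  have hbasis : e₁ ⬝ᵥ e₂ ⨯₃ n ≠ 0 := by rwa [← triple_product_permutation]
  set W := (n ⬝ᵥ n)⁻¹ • ((δ₂ ⬝ᵥ n) • e₁ - (δ₁ ⬝ᵥ n) • e₂ + (δ₁ ⬝ᵥ e₂) • n)
  have hW : ∀ x, W ⬝ᵥ x =
      (n ⬝ᵥ n)⁻¹ * ((δ₂ ⬝ᵥ n) * (e₁ ⬝ᵥ x) - (δ₁ ⬝ᵥ n) * (e₂ ⬝ᵥ x) + (δ₁ ⬝ᵥ e₂) * (n ⬝ᵥ x)) := by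
    intro x
    simp only [W, smul_dotProduct, add_dotProduct, sub_dotProduct, smul_eq_mul]
  have he₁n : e₁ ⬝ᵥ n = 0 := dot_self_cross e₁ e₂
  have he₂n : e₂ ⬝ᵥ n = 0 := dot_cross_self e₁ e₂
  have he₂e₁n : e₂ ⬝ᵥ e₁ ⨯₃ n = -(n ⬝ᵥ n) := by
    rw [triple_product_permutation, triple_product_permutation, ← cross_anticomm, dotProduct_neg]
  have he₁e₂n : e₁ ⬝ᵥ e₂ ⨯₃ n = n ⬝ᵥ n := by
    rw [triple_product_permutation, triple_product_permutation]
  have hn₂₁ : n ⬝ᵥ e₂ ⨯₃ e₁ = -(n ⬝ᵥ n) := by rw [← cross_anticomm, dotProduct_neg]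
  refine ⟨W, eq_of_dotProduct_eq hbasis ?_ ?_ ?_, eq_of_dotProduct_eq hbasis ?_ ?_ ?_⟩ <;>
    simp only [cross_dotProduct, cross_self, dotProduct_zero, hW, dot_self_cross, dot_cross_self,
      he₁n, he₂n, he₂e₁n, he₁e₂n, hn₂₁, h₁, h₂, eq_neg_of_add_eq_zero_right h₁₂, ← hn_def] <;>
    field_simp <;>
    ring

lemma exists_rigid_motion {a b c u v w : Fin 3 → ℝ} (hd : a ⬝ᵥ b ⨯₃ c ≠ 0)
    (hab : (v - u) ⬝ᵥ (b - a) = 0) (hbc : (w - v) ⬝ᵥ (c - b) = 0)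
    (hac : (w - u) ⬝ᵥ (c - a) = 0) :
    ∃ W t, u = W ⨯₃ a + t ∧ v = W ⨯₃ b + t ∧ w = W ⨯₃ c + t := by
  have hn : (b - a) ⨯₃ (c - a) ≠ 0 := by
    refine cross_ne_zero_of_triple_product_ne_zero (a := a) ?_
    simpa [dot_self_cross, dot_cross_self] using hd
  have hmixed : (v - u) ⬝ᵥ (c - a) + (w - u) ⬝ᵥ (b - a) = 0 := by
    rw [show w - v = (w - u) - (v - u) by abel, show c - b = (c - a) - (b - a) by abel] at hbc
    simp only [sub_dotProduct, dotProduct_sub] at hbc hab hac ⊢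
    linarith
  obtain ⟨W, hWb, hWc⟩ := exists_cross_eq_of_orthogonal hn hab hac hmixed
  rw [map_sub] at hWb hWc
  exact ⟨W, u - W ⨯₃ a, by abel, by linear_combination -hWb, by linear_combination -hWc⟩

lemma tan_half_eq_sin_div_one_add_cos {θ : ℝ} (h : 1 + cos θ ≠ 0) :
    tan (θ / 2) = sin θ / (1 + cos θ) := by
  obtain ⟨φ, rfl⟩ : ∃ φ, θ = 2 * φ := ⟨θ / 2, by ring⟩
  rw [sin_two_mul, cos_two_mul] at *
  have hc : cos φ ≠ 0 := by
    rintro hc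
    simp [hc] at h
  rw [mul_div_cancel_left₀ φ two_ne_zero, tan_eq_sin_div_cos]
  field_simp
  ring

/-- Spherical trigonometry in coordinates: `x, y, z` are the cosines of the sides opposite to
`A, B, C`, `P, Q, R` their sines, and `D = |det (a, b, c)|`. -/
lemma tan_half_add_sub_eq {A B C x y z P Q R D : ℝ} (hP : P ≠ 0) (hQ : Q ≠ 0) (hR : R ≠ 0)
    (hD : D ≠ 0) (hP2 : P ^ 2 = 1 - x ^ 2) (hQ2 : Q ^ 2 = 1 - y ^ 2) (hR2 : R ^ 2 = 1 - z ^ 2)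
    (hD2 : D ^ 2 = 1 + 2 * x * y * z - x ^ 2 - y ^ 2 - z ^ 2)
    (hcA : cos A = (x - z * y) / (R * Q)) (hsA : sin A = D / (R * Q))
    (hcB : cos B = (y - x * z) / (P * R)) (hsB : sin B = D / (P * R))
    (hcC : cos C = (z - y * x) / (Q * P)) (hsC : sin C = D / (Q * P)) :
    tan ((A + B - C) / 2) = (1 + z - x - y) / D := by
  have hcos : (1 + cos (A + B - C)) * (P * Q * R) ^ 2 = (1 + x) * (1 + y) * (1 - z) * D ^ 2 := by
    rw [cos_sub, cos_add, sin_add, hcA, hsA, hcB, hsB, hcC, hsC]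
    field_simp
    linear_combination (Q ^ 2 * R ^ 2) * hP2 + ((1 - x ^ 2) * R ^ 2) * hQ2
      + ((1 - x ^ 2) * (1 - y ^ 2)) * hR2 - (1 - x * y * z) * hD2
  have hsin : sin (A + B - C) * (P * Q * R) ^ 2
      = D * ((1 + x) * (1 + y) * (1 - z) * (1 + z - x - y)) := by
    rw [sin_sub, sin_add, cos_add, hcA, hsA, hcB, hsB, hcC, hsC]
    field_simp
    linear_combination hD2
  have hne : 1 + cos (A + B - C) ≠ 0 := by
    have hPQRD : P ^ 2 * Q ^ 2 * R ^ 2 * D ^ 2 ≠ 0 := by positivity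
    rintro h
    rw [h, zero_mul] at hcos
    apply hPQRD
    linear_combination (D ^ 2 * Q ^ 2 * R ^ 2) * hP2 + (D ^ 2 * (1 - x ^ 2) * R ^ 2) * hQ2
      + (D ^ 2 * (1 - x ^ 2) * (1 - y ^ 2)) * hR2 - ((1 - x) * (1 - y) * (1 + z)) * hcos
  rw [tan_half_eq_sin_div_one_add_cos hne, div_eq_div_iff hne hD]
  apply mul_right_cancel₀ (pow_ne_zero 2 (mul_ne_zero (mul_ne_zero hP hQ) hR))
  linear_combination D * hsin - (1 + z - x - y) * hcos

lemma tangent_dotProduct_tangent {a : Fin 3 → ℝ} (ha : a ⬝ᵥ a = 1) (x y : Fin 3 → ℝ) :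
    (x - (a ⬝ᵥ x) • a) ⬝ᵥ (y - (a ⬝ᵥ y) • a) = x ⬝ᵥ y - a ⬝ᵥ x * (a ⬝ᵥ y) := by
  simp only [sub_dotProduct, dotProduct_sub, smul_dotProduct, dotProduct_smul, smul_eq_mul, ha,
    dotProduct_comm x a]
  ring

lemma triple_product_sq_of_unit {a b c : Fin 3 → ℝ} (ha : a ⬝ᵥ a = 1) (hb : b ⬝ᵥ b = 1)
    (hc : c ⬝ᵥ c = 1) :
    (a ⬝ᵥ b ⨯₃ c) ^ 2 = 1 + 2 * (b ⬝ᵥ c) * (a ⬝ᵥ c) * (a ⬝ᵥ b)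
      - (b ⬝ᵥ c) ^ 2 - (a ⬝ᵥ c) ^ 2 - (a ⬝ᵥ b) ^ 2 := by
  rw [triple_product_sq, ha, hb, hc]
  ring

lemma cos_sphAngle_and_sin_sphAngle {a b c : Fin 3 → ℝ} (ha : a ⬝ᵥ a = 1) (hb : b ⬝ᵥ b = 1)
    (hc : c ⬝ᵥ c = 1) (hd : a ⬝ᵥ b ⨯₃ c ≠ 0) :
    cos (sphAngle a b c) = (b ⬝ᵥ c - a ⬝ᵥ b * (a ⬝ᵥ c)) /
        (√(1 - (a ⬝ᵥ b) ^ 2) * √(1 - (a ⬝ᵥ c) ^ 2)) ∧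
      sin (sphAngle a b c) = |a ⬝ᵥ b ⨯₃ c| / (√(1 - (a ⬝ᵥ b) ^ 2) * √(1 - (a ⬝ᵥ c) ^ 2)) := by
  have hb' : 0 < 1 - (a ⬝ᵥ b) ^ 2 := one_sub_sq_dotProduct_pos ha hb hd
  have hc' : 0 < 1 - (a ⬝ᵥ c) ^ 2 :=
    one_sub_sq_dotProduct_pos ha hc (c := b) (by rwa [triple_product_swap, neg_ne_zero])
  set N := √(1 - (a ⬝ᵥ b) ^ 2) * √(1 - (a ⬝ᵥ c) ^ 2)
  have hN : 0 < N := by positivity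
  have hN2 : N ^ 2 = (a ⬝ᵥ b ⨯₃ c) ^ 2 + (b ⬝ᵥ c - a ⬝ᵥ b * (a ⬝ᵥ c)) ^ 2 := by
    rw [mul_pow, sq_sqrt hb'.le, sq_sqrt hc'.le, triple_product_sq_of_unit ha hb hc]
    ring
  have hangle : sphAngle a b c = arccos ((b ⬝ᵥ c - a ⬝ᵥ b * (a ⬝ᵥ c)) / N) := by
    simp only [sphAngle, norm3_eq_sqrt, dot3_eq_dotProduct, tangent_dotProduct_tangent ha, hb, hc,
      ← sq, N]
  have hbound := abs_le_of_sq_le_sq' (a := (b ⬝ᵥ c - a ⬝ᵥ b * (a ⬝ᵥ c)) / N) (b := 1)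
    (by rw [div_pow, one_pow, div_le_one (by positivity), hN2]; nlinarith) zero_le_one
  refine ⟨by rw [hangle, cos_arccos hbound.1 hbound.2], ?_⟩
  have hsin_sq : 1 - ((b ⬝ᵥ c - a ⬝ᵥ b * (a ⬝ᵥ c)) / N) ^ 2 = (a ⬝ᵥ b ⨯₃ c / N) ^ 2 := by
    field_simp
    linear_combination hN2
  rw [hangle, sin_arccos, hsin_sq, sqrt_sq_eq_abs, abs_div, abs_of_pos hN]

/-- `tan ((A + B - C) / 2)` for the spherical triangle `abc` with angles `A, B, C` at `a, b, c`. -/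
def triangleWeight (a b c : Fin 3 → ℝ) : ℝ :=
  (1 + a ⬝ᵥ b - b ⬝ᵥ c - a ⬝ᵥ c) / |a ⬝ᵥ b ⨯₃ c|

lemma tan_half_sphAngle_add_sub {a b c : Fin 3 → ℝ} (ha : a ⬝ᵥ a = 1) (hb : b ⬝ᵥ b = 1)
    (hc : c ⬝ᵥ c = 1) (hd : a ⬝ᵥ b ⨯₃ c ≠ 0) :
    tan ((sphAngle a b c + sphAngle b c a - sphAngle c a b) / 2) = triangleWeight a b c := by
  have hd₁ : b ⬝ᵥ c ⨯₃ a ≠ 0 := by rwa [← triple_product_permutation]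
  have hd₂ : c ⬝ᵥ a ⨯₃ b ≠ 0 := by rwa [triple_product_permutation]
  obtain ⟨hcA, hsA⟩ := cos_sphAngle_and_sin_sphAngle ha hb hc hd
  obtain ⟨hcB, hsB⟩ := cos_sphAngle_and_sin_sphAngle hb hc ha hd₁
  obtain ⟨hcC, hsC⟩ := cos_sphAngle_and_sin_sphAngle hc ha hb hd₂
  simp only [← triple_product_permutation a b c, triple_product_permutation c a b,
    dotProduct_comm c a, dotProduct_comm b a, dotProduct_comm c b] at hsB hsC hcB hcC
  have hx := one_sub_sq_dotProduct_pos hb hc hd₁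
  have hy := one_sub_sq_dotProduct_pos ha hc (c := b) (by rwa [triple_product_swap, neg_ne_zero])
  have hz := one_sub_sq_dotProduct_pos ha hb hd
  refine tan_half_add_sub_eq (sqrt_pos.2 hx).ne' (sqrt_pos.2 hy).ne' (sqrt_pos.2 hz).ne'
    (abs_ne_zero.2 hd) (sq_sqrt hx.le) (sq_sqrt hy.le) (sq_sqrt hz.le) ?_ hcA hsA hcB hsB hcC hsC
  rw [sq_abs, triple_product_sq_of_unit ha hb hc]

lemma sphAngle_comm (a b c : Fin 3 → ℝ) : sphAngle a b c = sphAngle a c b := by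
  rw [sphAngle, sphAngle, dot3_comm (b - _), mul_comm]

lemma two_mul_cos_sq_half_arccos {z : ℝ} (hz : 0 < 1 - z ^ 2) :
    2 * cos (arccos z / 2) ^ 2 = 1 + z := by
  have hz' := abs_le_of_sq_le_sq' (a := z) (b := 1) (by linarith) zero_le_one
  rw [cos_sq, mul_div_cancel₀ _ two_ne_zero, cos_arccos hz'.1 hz'.2]
  ring

lemma two_mul_sin_sq_half_arccos {z : ℝ} (hz : 0 < 1 - z ^ 2) :
    2 * sin (arccos z / 2) ^ 2 = 1 - z := by
  rw [sin_sq, mul_sub, two_mul_cos_sq_half_arccos hz]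
  ring

lemma sphStarWeight_eq {m : ℕ} {p0 : Fin 3 → ℝ} {p : ZMod m → Fin 3 → ℝ} (hp0 : p0 ⬝ᵥ p0 = 1)
    (hp : ∀ j, p j ⬝ᵥ p j = 1) (hdet : ∀ j, p0 ⬝ᵥ p j ⨯₃ p (j + 1) ≠ 0) (j : ZMod m) :
    sphStarWeight m p0 p j
      = (triangleWeight p0 (p j) (p (j + 1)) + triangleWeight p0 (p j) (p (j - 1)))
        / (1 + p0 ⬝ᵥ p j) := by
  have hprev : p0 ⬝ᵥ p j ⨯₃ p (j - 1) ≠ 0 := by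
    rw [triple_product_swap, neg_ne_zero]
    simpa using hdet (j - 1)
  rw [sphStarWeight, sphAngle_comm p0 (p (j - 1)), sphAngle_comm (p j) p0,
    sphAngle_comm (p (j - 1)) (p j), tan_half_sphAngle_add_sub hp0 (hp j) (hp _) (hdet j),
    tan_half_sphAngle_add_sub hp0 (hp j) (hp _) hprev, dot3_eq_dotProduct,
    two_mul_cos_sq_half_arccos (one_sub_sq_dotProduct_pos hp0 (hp j) (hdet j))]

/-- For an infinitesimal rigid motion `x ↦ W ⨯₃ x + t` this is `W ⬝ᵥ a + t ⬝ᵥ a ⨯₃ b / (1 + a ⬝ᵥ b)`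
(`edgeFlux_rigidMotion`): it depends only on the deformation of the edge `ab`. -/
def edgeFlux (a b u v : Fin 3 → ℝ) : ℝ :=
  (v - (a ⬝ᵥ b) • u) ⬝ᵥ a ⨯₃ b / (1 - (a ⬝ᵥ b) ^ 2)

lemma edgeFlux_rigidMotion {a b : Fin 3 → ℝ} (ha : a ⬝ᵥ a = 1) (hb : b ⬝ᵥ b = 1)
    (hab : 0 < 1 - (a ⬝ᵥ b) ^ 2) (W t : Fin 3 → ℝ) :
    edgeFlux a b (W ⨯₃ a + t) (W ⨯₃ b + t) = W ⬝ᵥ a + t ⬝ᵥ a ⨯₃ b / (1 + a ⬝ᵥ b) := by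
  have h₁ : 1 + a ⬝ᵥ b ≠ 0 := by nlinarith
  have h₂ : 1 - a ⬝ᵥ b ≠ 0 := by nlinarith
  rw [edgeFlux, show 1 - (a ⬝ᵥ b) ^ 2 = (1 - a ⬝ᵥ b) * (1 + a ⬝ᵥ b) by ring]
  simp only [smul_add, sub_dotProduct, add_dotProduct, smul_dotProduct, cross_dot_cross, ha, hb,
    smul_eq_mul, dotProduct_comm b a]
  field_simp
  ring

lemma tangent_combination_eq_cross {a b c : Fin 3 → ℝ} (ha : a ⬝ᵥ a = 1) (hb : b ⬝ᵥ b = 1)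
    (hc : c ⬝ᵥ c = 1) (hd : a ⬝ᵥ b ⨯₃ c ≠ 0) :
    ((1 + a ⬝ᵥ b - b ⬝ᵥ c - a ⬝ᵥ c) * (1 + a ⬝ᵥ c)) • (b - (a ⬝ᵥ b) • a)
      + ((1 + a ⬝ᵥ c - b ⬝ᵥ c - a ⬝ᵥ b) * (1 + a ⬝ᵥ b)) • (c - (a ⬝ᵥ c) • a)
    = (a ⬝ᵥ b ⨯₃ c) • ((1 + a ⬝ᵥ c) • a ⨯₃ b - (1 + a ⬝ᵥ b) • a ⨯₃ c) := by
  have hG := triple_product_sq_of_unit ha hb hc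
  refine eq_of_dotProduct_eq hd ?_ ?_ ?_ <;>
    simp only [add_dotProduct, sub_dotProduct, smul_dotProduct, smul_eq_mul, cross_dotProduct,
      cross_self, dotProduct_zero, dot_cross_self, ha, hb, hc, dotProduct_comm b a,
      dotProduct_comm c a, dotProduct_comm c b, triple_product_swap a b c]
  · ring
  · linear_combination -(1 + a ⬝ᵥ b) * hG
  · linear_combination -(1 + a ⬝ᵥ c) * hG

lemma triangleWeight_mul_radial_add_eq_edgeFlux_sub {a b c u v w : Fin 3 → ℝ}
    (ha : a ⬝ᵥ a = 1) (hb : b ⬝ᵥ b = 1) (hc : c ⬝ᵥ c = 1) (hd : 0 < a ⬝ᵥ b ⨯₃ c)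
    (hab : (v - u) ⬝ᵥ (b - a) = 0) (hbc : (w - v) ⬝ᵥ (c - b) = 0)
    (hac : (w - u) ⬝ᵥ (c - a) = 0) :
    triangleWeight a b c / (1 + a ⬝ᵥ b) * (v ⬝ᵥ b - a ⬝ᵥ b * (u ⬝ᵥ a))
      + triangleWeight a c b / (1 + a ⬝ᵥ c) * (w ⬝ᵥ c - a ⬝ᵥ c * (u ⬝ᵥ a))
      = edgeFlux a b u v - edgeFlux a c u w := by
  obtain ⟨W, t, rfl, rfl, rfl⟩ := exists_rigid_motion hd.ne' hab hbc hac
  have hz := one_sub_sq_dotProduct_pos ha hb hd.ne'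
  have hy := one_sub_sq_dotProduct_pos ha hc (c := b)
    (by rw [triple_product_swap]; exact neg_ne_zero.2 hd.ne')
  have h₁ : 1 + a ⬝ᵥ b ≠ 0 := by nlinarith
  have h₂ : 1 + a ⬝ᵥ c ≠ 0 := by nlinarith
  have key := congrArg (t ⬝ᵥ ·) (tangent_combination_eq_cross ha hb hc hd.ne')
  rw [edgeFlux_rigidMotion ha hb hz, edgeFlux_rigidMotion ha hc hy, triangleWeight, triangleWeight,
    triple_product_swap a b c, abs_neg, abs_of_pos hd]
  simp only [dotProduct_add, dotProduct_sub, dotProduct_smul, add_dotProduct, smul_eq_mul,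
    cross_dotProduct, cross_self, dotProduct_zero, zero_add, dotProduct_comm c b] at key ⊢
  field_simp
  linear_combination key

lemma sum_comp_add_right {G M : Type*} [AddGroup G] [Fintype G] [AddCommMonoid M] (f : G → M)
    (a : G) : ∑ j, f (j + a) = ∑ j, f j :=
  Equiv.sum_comp (Equiv.addRight a) f

lemma sum_sphStarWeight_mul_radial_eq_zero {m : ℕ} [NeZero m] {p0 q0 : Fin 3 → ℝ}
    {p q : ZMod m → Fin 3 → ℝ} (hp0 : p0 ⬝ᵥ p0 = 1) (hp : ∀ j, p j ⬝ᵥ p j = 1)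
    (hdet : ∀ j, 0 < p0 ⬝ᵥ p j ⨯₃ p (j + 1)) (hiso0 : ∀ j, (q j - q0) ⬝ᵥ (p j - p0) = 0)
    (hiso1 : ∀ j, (q (j + 1) - q j) ⬝ᵥ (p (j + 1) - p j) = 0) :
    ∑ j, sphStarWeight m p0 p j * (q j ⬝ᵥ p j - p0 ⬝ᵥ p j * (q0 ⬝ᵥ p0)) = 0 := by
  set g : ZMod m → ℝ := fun j => q j ⬝ᵥ p j - p0 ⬝ᵥ p j * (q0 ⬝ᵥ p0)
  set next : ZMod m → ℝ := fun j => triangleWeight p0 (p j) (p (j + 1)) / (1 + p0 ⬝ᵥ p j) * g j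
  set prev : ZMod m → ℝ := fun j => triangleWeight p0 (p j) (p (j - 1)) / (1 + p0 ⬝ᵥ p j) * g j
  set E : ZMod m → ℝ := fun j => edgeFlux p0 (p j) q0 (q j)
  calc ∑ j, sphStarWeight m p0 p j * g j
      = ∑ j, (next j + prev (j + 1)) := by
        rw [Finset.sum_add_distrib, sum_comp_add_right prev, ← Finset.sum_add_distrib]
        refine Finset.sum_congr rfl fun j _ => ?_
        rw [sphStarWeight_eq hp0 hp (fun k => (hdet k).ne') j]
        ring
    _ = ∑ j, (E j - E (j + 1)) := Finset.sum_congr rfl fun j _ => by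
        simpa [next, prev, g, E] using triangleWeight_mul_radial_add_eq_edgeFlux_sub hp0 (hp j)
          (hp (j + 1)) (hdet j) (hiso0 j) (hiso1 j) (hiso0 (j + 1))
    _ = 0 := by rw [Finset.sum_sub_distrib, sum_comp_add_right E, sub_self]

theorem sph_inf_iso_radial_eigen
    (m : ℕ) [NeZero m]
    (p0 : Fin 3 → ℝ) (p : ZMod m → Fin 3 → ℝ)
    (hp0 : norm3 p0 = 1) (hp : ∀ j, norm3 (p j) = 1)
    (hdet : ∀ j : ZMod m, 0 < det3 p0 (p j) (p (j+1)))
    (q0 : Fin 3 → ℝ) (q : ZMod m → Fin 3 → ℝ)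
    (hiso0 : ∀ j : ZMod m, dot3 (q j - q0) (p j - p0) = 0)
    (hiso1 : ∀ j : ZMod m, dot3 (q (j+1) - q j) (p (j+1) - p j) = 0) :
    ∑ j : ZMod m, sphStarWeight m p0 p j * (dot3 (q j) (p j) - dot3 q0 p0)
      = -2 * sphStarVertexWeight m p0 p * dot3 q0 p0 := by
  have hp0' := dotProduct_self_eq_one_of_norm3_eq_one hp0
  have hp' := fun j => dotProduct_self_eq_one_of_norm3_eq_one (hp j)
  simp only [dot3_eq_dotProduct, det3_eq_dotProduct_cross] at hdet hiso0 hiso1 ⊢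
  have hradial := sum_sphStarWeight_mul_radial_eq_zero hp0' hp' hdet hiso0 hiso1
  have hsin : ∀ j, sin (arccos (p0 ⬝ᵥ p j) / 2) ^ 2 = (1 - p0 ⬝ᵥ p j) / 2 := fun j => by
    rw [← two_mul_sin_sq_half_arccos (one_sub_sq_dotProduct_pos hp0' (hp' j) (hdet j).ne')]
    ring
  rw [sphStarVertexWeight, ← sub_eq_zero, ← hradial, Finset.mul_sum, Finset.sum_mul,
    ← Finset.sum_sub_distrib]
  refine Finset.sum_congr rfl fun j _ => ?_
  rw [dot3_eq_dotProduct, hsin]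
  ring
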